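/- Let r, r₁, r₂ be red points and let S be the closed sector with apex r bounded by the rays from r through r₁ and r₂ (containing no other red point in its interior). Suppose S contains at least one blue point, the full point set R ∪ B is in general position, and b ∈ S ∩ B is chosen to minimize the smaller of the angles ∠(rb, rr₁) and ∠(rb, rr₂) over blue points in S. If this minimum is attained at ∠(rb, rr₁), then the triangle with vertices r, r₁, b is empty, i.e., its convex hull contains no point of R ∪ B other than r, r₁, b. -/

import Mathlib

/-- No three distinct points of `S` are collinear. -/
def GenPos (S : Set ℂ) : Prop :=
  ∀ p ∈ S, ∀ q ∈ S, ∀ r ∈ S, p ≠ q → p ≠ r → q ≠ r → ¬ Collinear ℝ ({p, q, r} : Set ℂ)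

/-- The counterclockwise angle in `[0, 2π)` from direction `u` to direction `v`. -/
noncomputable def ccwAngle (u v : ℂ) : ℝ :=
  if 0 ≤ (v / u).arg then (v / u).arg else (v / u).arg + 2 * Real.pi

/-!
Every point `p` of the triangle satisfies `p - r = β (r₁ - r) + γ (b - r)` with `β, γ ≥ 0`.
As the angle of `b` from the ray `r r₁` is at most half that of `r₂`, it is below `π`, so `b`
lies strictly left of the line `r r₁`; hence for `β > 0` the angle of `p` is strictly smaller
than that of `b`. Such a `p` lies in `S`, has a smaller angle than `r₂` and than every blue
point of `S`, so it is `r` or `r₁`. For `β = 0` the point `p` lies on the line `r b`, and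
general position leaves only `p = r` or `p = b`.
-/

open Complex Real

theorem exists_sub_eq_smul_add_smul_of_mem_convexHull_triple {E : Type*} [AddCommGroup E]
    [Module ℝ E] {a b c p : E} (hp : p ∈ convexHull ℝ {a, b, c}) :
    ∃ β γ : ℝ, 0 ≤ β ∧ 0 ≤ γ ∧ p - a = β • (b - a) + γ • (c - a) := by
  rw [convexHull_insert ⟨b, Set.mem_insert _ _⟩, convexHull_pair, mem_convexJoin] at hp
  obtain ⟨x, hx, z, ⟨s', t', hs', ht', hst', rfl⟩, s, t, hs, ht, hst, rfl⟩ := hp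
  rw [Set.mem_singleton_iff.mp hx]
  refine ⟨t * s', t * t', mul_nonneg ht hs', mul_nonneg ht ht', ?_⟩
  obtain rfl : s = 1 - t := by linarith
  obtain rfl : s' = 1 - t' := by linarith
  module

theorem collinear_of_sub_eq_smul_sub {E : Type*} [AddCommGroup E] [Module ℝ E]
    {p₀ p₁ q : E} (t : ℝ) (h : q - p₀ = t • (p₁ - p₀)) : Collinear ℝ {p₀, p₁, q} := by
  refine collinear_triple_of_mem_affineSpan_pair (left_mem_affineSpan_pair ℝ p₀ p₁)
    (right_mem_affineSpan_pair ℝ p₀ p₁) ?_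
  rw [← sub_add_cancel q p₀, ← vadd_eq_add, vadd_left_mem_affineSpan_pair]
  exact ⟨t, h.symm⟩

theorem GenPos.eq_or_eq_of_sub_eq_smul_sub {s : Set ℂ} (hs : GenPos s) {p₀ p₁ q : ℂ}
    (hp₀ : p₀ ∈ s) (hp₁ : p₁ ∈ s) (hq : q ∈ s) (h₀₁ : p₀ ≠ p₁) (t : ℝ)
    (h : q - p₀ = t • (p₁ - p₀)) : q = p₀ ∨ q = p₁ := by
  by_contra! hne
  exact hs p₀ hp₀ p₁ hp₁ q hq h₀₁ hne.1.symm hne.2.symm (collinear_of_sub_eq_smul_sub t h)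

theorem GenPos.im_div_sub_ne_zero {s : Set ℂ} (hs : GenPos s) {p₀ p₁ q : ℂ}
    (hp₀ : p₀ ∈ s) (hp₁ : p₁ ∈ s) (hq : q ∈ s) (h₀₁ : p₀ ≠ p₁) (hq₀ : q ≠ p₀) (hq₁ : q ≠ p₁) :
    ((q - p₀) / (p₁ - p₀)).im ≠ 0 := by
  intro him
  have hw_real : (q - p₀) / (p₁ - p₀) = (((q - p₀) / (p₁ - p₀)).re : ℂ) :=
    Complex.ext rfl (by simp [him])
  have hq_line : q - p₀ = ((q - p₀) / (p₁ - p₀)).re • (p₁ - p₀) := by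
    rw [Complex.real_smul, ← hw_real, div_mul_cancel₀ _ (sub_ne_zero.mpr h₀₁.symm)]
  rcases hs.eq_or_eq_of_sub_eq_smul_sub hp₀ hp₁ hq h₀₁ _ hq_line with h | h
  exacts [hq₀ h, hq₁ h]

theorem Complex.arg_lt_arg_of_im_div_neg {z w : ℂ} (hw : 0 ≤ w.im) (h : (z / w).im < 0) :
    z.arg < w.arg := by
  have hw₀ : w ≠ 0 := by rintro rfl; simp at h
  have hzw₀ : z / w ≠ 0 := by rintro hzw; simp [hzw] at h
  have hzw : (z / w).arg < 0 := arg_neg_iff.mpr h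
  have hsum : (w * (z / w)).arg = w.arg + (z / w).arg :=
    arg_mul hw₀ hzw₀ ⟨by linarith [arg_nonneg_iff.mpr hw, neg_pi_lt_arg (z / w)],
      by linarith [arg_le_pi w]⟩
  rw [mul_div_cancel₀ z hw₀] at hsum
  linarith

theorem ccwAngle_nonneg (u v : ℂ) : 0 ≤ ccwAngle u v := by
  unfold ccwAngle
  split_ifs with h
  · exact h
  · linarith [neg_pi_lt_arg (v / u), pi_pos]

theorem ccwAngle_lt_two_pi (u v : ℂ) : ccwAngle u v < 2 * π := by
  unfold ccwAngle
  split_ifs with h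
  · linarith [arg_le_pi (v / u), pi_pos]
  · linarith

theorem ccwAngle_of_im_div_nonneg {u v : ℂ} (h : 0 ≤ (v / u).im) :
    ccwAngle u v = (v / u).arg :=
  if_pos (arg_nonneg_iff.mpr h)

theorem im_div_nonneg_of_ccwAngle_lt_pi {u v : ℂ} (h : ccwAngle u v < π) : 0 ≤ (v / u).im := by
  rw [← arg_nonneg_iff]
  by_contra! hneg
  rw [ccwAngle, if_neg hneg.not_ge] at h
  linarith [neg_pi_lt_arg (v / u)]

theorem ccwAngle_smul_add_smul_lt {u v : ℂ} (hv : 0 < (v / u).im) {β γ : ℝ} (hβ : 0 < β)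
    (hγ : 0 ≤ γ) : ccwAngle u (β • u + γ • v) < ccwAngle u v := by
  have hu : u ≠ 0 := by rintro rfl; simp at hv
  set w := v / u
  have hdiv : (β • u + γ • v) / u = β + γ * w := by
    simp only [real_smul, w]
    field_simp
  have hdiv_im : ((β + γ * w) / w).im < 0 := by
    rw [add_div, mul_div_cancel_right₀ _ (by rintro h; simp [h] at hv), div_eq_mul_inv]
    simp only [add_im, ofReal_im, mul_im, ofReal_re, inv_im, zero_mul]
    have hnormSq : 0 < normSq w := normSq_pos.mpr (by rintro h; simp [h] at hv)
    have hpos : 0 < β * (w.im / normSq w) := by positivity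
    rw [neg_div]
    linarith
  rw [ccwAngle_of_im_div_nonneg hv.le, ccwAngle_of_im_div_nonneg, hdiv]
  · exact arg_lt_arg_of_im_div_neg hv.le hdiv_im
  · rw [hdiv]
    simp only [add_im, ofReal_im, mul_im, ofReal_re, zero_mul, zero_add]
    positivity

theorem stmt_7_general (R B : Finset ℂ) (hdisj : Disjoint R B) (hgp : GenPos (↑R ∪ ↑B))
    (r r₁ r₂ b : ℂ) (hr : r ∈ R) (hr₁ : r₁ ∈ R)
    (hrr₁ : r ≠ r₁)
    (S : Set ℂ)
    (hS : S = {x | x = r ∨ ccwAngle (r₁ - r) (x - r) ≤ ccwAngle (r₁ - r) (r₂ - r)})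
    (hnored : ∀ s ∈ R, s ∈ S → s = r ∨ s = r₁ ∨ s = r₂)
    (hb : b ∈ B)
    (hmin : ∀ q ∈ B, q ∈ S →
      min (ccwAngle (r₁ - r) (b - r))
          (ccwAngle (r₁ - r) (r₂ - r) - ccwAngle (r₁ - r) (b - r)) ≤
      min (ccwAngle (r₁ - r) (q - r))
          (ccwAngle (r₁ - r) (r₂ - r) - ccwAngle (r₁ - r) (q - r)))
    (hside : ccwAngle (r₁ - r) (b - r) ≤
      ccwAngle (r₁ - r) (r₂ - r) - ccwAngle (r₁ - r) (b - r)) :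
    convexHull ℝ {r, r₁, b} ∩ (↑R ∪ ↑B : Set ℂ) = ({r, r₁, b} : Set ℂ) := by
  have hrRB : r ∈ (↑R ∪ ↑B : Set ℂ) := Or.inl hr
  have hr₁RB : r₁ ∈ (↑R ∪ ↑B : Set ℂ) := Or.inl hr₁
  have hbRB : b ∈ (↑R ∪ ↑B : Set ℂ) := Or.inr hb
  have hbr : b ≠ r := fun h => Finset.disjoint_left.mp hdisj hr (h ▸ hb)
  have hbr₁ : b ≠ r₁ := fun h => Finset.disjoint_left.mp hdisj hr₁ (h ▸ hb)
  have hθb := ccwAngle_nonneg (r₁ - r) (b - r)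
  have hθr₂ := ccwAngle_lt_two_pi (r₁ - r) (r₂ - r)
  have hb_left : 0 < ((b - r) / (r₁ - r)).im :=
    (im_div_nonneg_of_ccwAngle_lt_pi (by linarith)).lt_of_ne'
      (hgp.im_div_sub_ne_zero hrRB hr₁RB hbRB hrr₁ hbr hbr₁)
  refine subset_antisymm ?_ (Set.subset_inter (subset_convexHull ℝ _) ?_)
  · rintro p ⟨hp, hpRB⟩
    obtain ⟨β, γ, hβ, hγ, hpβγ⟩ := exists_sub_eq_smul_add_smul_of_mem_convexHull_triple hp
    rcases hβ.eq_or_lt with rfl | hβ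
    · rw [zero_smul, zero_add] at hpβγ
      rcases hgp.eq_or_eq_of_sub_eq_smul_sub hrRB hbRB hpRB hbr.symm γ hpβγ with rfl | rfl <;>
        simp
    have hθp : ccwAngle (r₁ - r) (p - r) < ccwAngle (r₁ - r) (b - r) :=
      hpβγ ▸ ccwAngle_smul_add_smul_lt hb_left hβ hγ
    have hpS : p ∈ S := hS ▸ Or.inr (by linarith)
    rcases hpRB with hpR | hpB
    · obtain rfl | rfl | rfl := hnored p hpR hpS
      · simp
      · simp
      · linarith
    · have hθbp : ccwAngle (r₁ - r) (b - r) ≤ ccwAngle (r₁ - r) (p - r) :=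
        (min_eq_left hside ▸ hmin p hpB hpS).trans (min_le_left _ _)
      linarith
  · exact Set.insert_subset hrRB (Set.insert_subset hr₁RB (Set.singleton_subset_iff.mpr hbRB))

/-- Let `S` be the closed sector with apex `r` swept counterclockwise from the ray `r r₁`
to the ray `r r₂`, containing no red point other than `r, r₁, r₂`.  If `b` is a blue
point of `S` minimizing the smaller of the angles `∠(rb, rr₁)` and `∠(rb, rr₂)` over blue
points of `S`, and this minimum is attained at `∠(rb, rr₁)`, then `r, r₁, b` form an
empty triangle. -/
theorem stmt_7 (R B : Finset ℂ) (hdisj : Disjoint R B) (hgp : GenPos (↑R ∪ ↑B))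
    (r r₁ r₂ b : ℂ) (hr : r ∈ R) (hr₁ : r₁ ∈ R) (hr₂ : r₂ ∈ R)
    (hrr₁ : r ≠ r₁) (hrr₂ : r ≠ r₂) (hr₁r₂ : r₁ ≠ r₂)
    (S : Set ℂ)
    (hS : S = {x | x = r ∨ ccwAngle (r₁ - r) (x - r) ≤ ccwAngle (r₁ - r) (r₂ - r)})
    (hnored : ∀ s ∈ R, s ∈ S → s = r ∨ s = r₁ ∨ s = r₂)
    (hb : b ∈ B) (hbS : b ∈ S)
    (hmin : ∀ q ∈ B, q ∈ S →
      min (ccwAngle (r₁ - r) (b - r))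
          (ccwAngle (r₁ - r) (r₂ - r) - ccwAngle (r₁ - r) (b - r)) ≤
      min (ccwAngle (r₁ - r) (q - r))
          (ccwAngle (r₁ - r) (r₂ - r) - ccwAngle (r₁ - r) (q - r)))
    (hside : ccwAngle (r₁ - r) (b - r) ≤
      ccwAngle (r₁ - r) (r₂ - r) - ccwAngle (r₁ - r) (b - r)) :
    convexHull ℝ {r, r₁, b} ∩ (↑R ∪ ↑B : Set ℂ) = ({r, r₁, b} : Set ℂ) :=
  stmt_7_general R B hdisj hgp r r₁ r₂ b hr hr₁ hrr₁ S hS hnored hb hmin hside
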